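/- arXiv:1304.0608 — 4 statements merged into one kernel-verified Lean document; each statement's English description precedes it below -/
import Mathlib

section
/- The function g(b) = −(log₂ e)/(M−1) · ∑_{i=1}^{2^b} 1/i on nonnegative integers is discretely concave: for all b ≥ 0, g(b+2) − 2·g(b+1) + g(b) < 0. -/
/-- Expected log-quantization error of `b`-bit RVQ in dimension `M`:
`g(b) = −(log₂ e)/(M−1) · ∑_{i=1}^{2^b} 1/i`. -/
noncomputable def rvqLogErr (M : ℕ) (b : ℕ) : ℝ :=
  -(Real.logb 2 (Real.exp 1)) / ((M : ℝ) - 1) *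
    ∑ i ∈ Finset.Icc 1 (2 ^ b : ℕ), (1 : ℝ) / (i : ℝ)

/-! With `n = 2^b`, the second difference of `g` is `-c · ((H(4n) - H(2n)) - (H(2n) - H(n)))`
for a constant `c > 0`. The block sum `D(n) = H(2n) - H(n)` is strictly increasing, since
`D(n+1) - D(n) = 1/(2n+1) - 1/(2n+2) > 0`; hence `D(2n) > D(n)` and the second difference
is negative. -/

theorem strictMono_harmonic_two_mul_sub_harmonic :
    StrictMono fun n : ℕ => harmonic (2 * n) - harmonic n := by
  refine strictMono_nat_of_lt_succ fun n => ?_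
  have hstep :
      harmonic (2 * (n + 1)) = harmonic (2 * n) + (↑(2 * n + 1))⁻¹ + (↑(2 * n + 2))⁻¹ := by
    rw [show 2 * (n + 1) = 2 * n + 1 + 1 by ring, harmonic_succ, harmonic_succ]
  have hlt : ((2 * n + 2 : ℕ) : ℚ)⁻¹ < ((2 * n + 1 : ℕ) : ℚ)⁻¹ :=
    inv_strictAnti₀ (by positivity) (by norm_cast; omega)
  have hhalf : ((n + 1 : ℕ) : ℚ)⁻¹ = 2 * ((2 * n + 2 : ℕ) : ℚ)⁻¹ := by
    push_cast; field_simp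
  simp only [hstep, harmonic_succ, hhalf]
  linarith

theorem harmonic_second_diff_pos {n : ℕ} (hn : 0 < n) :
    0 < harmonic (4 * n) - 2 * harmonic (2 * n) + harmonic n := by
  have h := strictMono_harmonic_two_mul_sub_harmonic (show n < 2 * n by omega)
  simp only [show 2 * (2 * n) = 4 * n by ring] at h
  linarith

theorem rvqLogErr_eq_harmonic (M b : ℕ) :
    rvqLogErr M b = -(Real.logb 2 (Real.exp 1) / ((M : ℝ) - 1)) * harmonic (2 ^ b) := by
  simp only [rvqLogErr, neg_div, one_div, neg_mul, harmonic_eq_sum_Icc, Rat.cast_sum,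
    Rat.cast_inv, Rat.cast_natCast]

/-- Discrete concavity of the expected log quantization error. -/
theorem stmt4 (M : ℕ) (hM : 2 ≤ M) (b : ℕ) :
    rvqLogErr M (b + 2) - 2 * rvqLogErr M (b + 1) + rvqLogErr M b < 0 := by
  set c := Real.logb 2 (Real.exp 1) / ((M : ℝ) - 1)
  have hc : 0 < c := by
    have hM' : (2 : ℝ) ≤ M := by exact_mod_cast hM
    exact div_pos (Real.logb_pos one_lt_two (Real.one_lt_exp_iff.mpr one_pos)) (by linarith)
  set n := 2 ^ b
  have hH : (0 : ℝ) < ((harmonic (4 * n) - 2 * harmonic (2 * n) + harmonic n : ℚ) : ℝ) :=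
    Rat.cast_pos.mpr (harmonic_second_diff_pos (Nat.two_pow_pos b))
  rw [rvqLogErr_eq_harmonic, rvqLogErr_eq_harmonic, rvqLogErr_eq_harmonic,
    show 2 ^ (b + 2) = 4 * n by ring, show 2 ^ (b + 1) = 2 * n by ring]
  calc _ = -c * ((harmonic (4 * n) - 2 * harmonic (2 * n) + harmonic n : ℚ) : ℝ) := by
        push_cast; ring
    _ < 0 := mul_neg_of_neg_of_pos (neg_neg_of_pos hc) hH
end

section
/- For Z with complementary CDF P(Z > z) = (1 − z^{M−1})^N on [0,1], one has E[ln Z] = −(1/(M−1)) · ∑_{i=1}^{N} 1/i. -/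
/-!
With `W = -log Z ≥ 0`, the layer-cake formula gives `E[W] = ∫₀^∞ P(Z ≤ e^{-t}) dt`, and
`P(Z ≤ e^{-t}) = 1 - (1 - e^{-kt})^N` with `k = M - 1`. The geometric sum
`1 - (1 - x)^N = ∑_{j<N} (1 - x)^j x` splits this integrand into terms
`(1 - e^{-kt})^j e^{-kt}`, each with the explicit antiderivative
`(1 - e^{-kt})^{j+1} / (k (j+1))`, so `E[W] = (1/k) ∑_{i=1}^N 1/i`.
-/

open MeasureTheory Set Filter Real Topology

section ExpIntegrals

variable {c : ℝ}

theorem integrableOn_one_sub_exp_pow_mul_exp (hc : 0 < c) (n : ℕ) :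
    IntegrableOn (fun t => (1 - exp (-(c * t))) ^ n * exp (-(c * t))) (Ioi 0) := by
  refine (exp_neg_integrableOn_Ioi 0 hc).mono' (by fun_prop) ?_
  filter_upwards [ae_restrict_mem measurableSet_Ioi] with t ht
  have h1 : exp (-(c * t)) ≤ 1 := exp_le_one_iff.mpr (by nlinarith [mem_Ioi.mp ht])
  have h0 : 0 ≤ 1 - exp (-(c * t)) := by linarith
  rw [norm_of_nonneg (by positivity), neg_mul]
  exact mul_le_of_le_one_left (exp_pos _).le (pow_le_one₀ h0 (by linarith [exp_pos (-(c * t))]))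

theorem integral_one_sub_exp_pow_mul_exp (hc : 0 < c) (n : ℕ) :
    ∫ t in Ioi 0, (1 - exp (-(c * t))) ^ n * exp (-(c * t)) = 1 / (c * (n + 1)) := by
  have hderiv : ∀ t ∈ Ici (0 : ℝ),
      HasDerivAt (fun t => (1 - exp (-(c * t))) ^ (n + 1) / (c * (n + 1)))
        ((1 - exp (-(c * t))) ^ n * exp (-(c * t))) t := fun t _ => by
    have hbase : HasDerivAt (fun t => 1 - exp (-(c * t))) (exp (-(c * t)) * c) t := by
      simpa using ((hasDerivAt_id t).const_mul c).neg.exp.const_sub 1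
    refine ((hbase.fun_pow (n + 1)).div_const (c * (n + 1))).congr_deriv ?_
    rw [Nat.add_sub_cancel]
    push_cast
    field_simp
  have hlim : Tendsto (fun t => (1 - exp (-(c * t))) ^ (n + 1) / (c * (n + 1))) atTop
      (𝓝 (1 / (c * (n + 1)))) := by
    have : Tendsto (fun t => exp (-(c * t))) atTop (𝓝 0) :=
      tendsto_exp_atBot.comp (tendsto_neg_atTop_atBot.comp (tendsto_id.const_mul_atTop hc))
    simpa using ((this.const_sub 1).pow (n + 1)).div_const (c * (n + 1))
  rw [integral_Ioi_of_hasDerivAt_of_tendsto' hderiv (integrableOn_one_sub_exp_pow_mul_exp hc n)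
    hlim]
  simp

theorem one_sub_one_sub_exp_pow_eq_sum (c t : ℝ) (n : ℕ) :
    1 - (1 - exp (-(c * t))) ^ n =
      ∑ k ∈ Finset.range n, (1 - exp (-(c * t))) ^ k * exp (-(c * t)) := by
  rw [← Finset.sum_mul, ← mul_neg_geom_sum, sub_sub_cancel, mul_comm]

theorem integrableOn_one_sub_one_sub_exp_pow (hc : 0 < c) (n : ℕ) :
    IntegrableOn (fun t => 1 - (1 - exp (-(c * t))) ^ n) (Ioi 0) := by
  simp_rw [one_sub_one_sub_exp_pow_eq_sum]
  exact integrable_finsetSum _ fun k _ => integrableOn_one_sub_exp_pow_mul_exp hc k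

theorem integral_one_sub_one_sub_exp_pow (hc : 0 < c) (n : ℕ) :
    ∫ t in Ioi 0, 1 - (1 - exp (-(c * t))) ^ n = (∑ i ∈ Finset.Icc 1 n, (1 : ℝ) / i) / c := by
  simp_rw [one_sub_one_sub_exp_pow_eq_sum]
  rw [integral_finsetSum _ fun k _ => integrableOn_one_sub_exp_pow_mul_exp hc k,
    ← Finset.Ico_add_one_right_eq_Icc, ← Finset.sum_Ico_add' (fun i : ℕ => (1 : ℝ) / i) 0 n 1,
    Nat.Ico_zero_eq_range, Finset.sum_div]
  refine Finset.sum_congr rfl fun k _ => ?_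
  rw [integral_one_sub_exp_pow_mul_exp hc]
  push_cast
  field_simp

end ExpIntegrals

section LogLayerCake

variable {Ω : Type*} [MeasurableSpace Ω] {μ : Measure Ω} {Z : Ω → ℝ}

theorem measure_le_eq_ofReal_one_sub [IsProbabilityMeasure μ] (hZ : Measurable Z) {z p : ℝ}
    (hp : 0 ≤ p) (h : μ {ω | z < Z ω} = ENNReal.ofReal p) :
    μ {ω | Z ω ≤ z} = ENNReal.ofReal (1 - p) := by
  have hcompl : {ω | Z ω ≤ z} = {ω | z < Z ω}ᶜ := by ext; simp
  rw [hcompl, prob_compl_eq_one_sub (measurableSet_lt measurable_const hZ), h,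
    ← ENNReal.ofReal_one, ← ENNReal.ofReal_sub _ hp]

theorem integral_neg_log_eq_lintegral_measure_le_exp (hZ : AEMeasurable Z μ)
    (hpos : ∀ᵐ ω ∂μ, 0 < Z ω) (hle : ∀ᵐ ω ∂μ, Z ω ≤ 1) :
    ∫ ω, -log (Z ω) ∂μ = (∫⁻ t in Ioi 0, μ {ω | Z ω ≤ exp (-t)}).toReal := by
  have hnonneg : 0 ≤ᵐ[μ] fun ω => -log (Z ω) := by
    filter_upwards [hpos, hle] with ω h0 h1 using neg_nonneg.mpr (log_nonpos h0.le h1)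
  rw [integral_eq_lintegral_of_nonneg_ae hnonneg hZ.log.neg.aestronglyMeasurable,
    lintegral_eq_lintegral_meas_le μ hnonneg hZ.log.neg]
  congr 1
  refine lintegral_congr fun t => measure_congr <| eventuallyEq_set.mpr ?_
  filter_upwards [hpos] with ω hω
  rw [le_neg, log_le_iff_le_exp hω]

theorem integral_log_of_measure_gt_eq_one_sub_pow_pow [IsProbabilityMeasure μ] {k : ℕ}
    (hk : k ≠ 0) (N : ℕ) (hZ : Measurable Z) (hval : ∀ ω, Z ω ∈ Icc (0 : ℝ) 1)
    (hccdf : ∀ z ∈ Icc (0 : ℝ) 1, μ {ω | z < Z ω} = ENNReal.ofReal ((1 - z ^ k) ^ N)) :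
    ∫ ω, log (Z ω) ∂μ = -(∑ i ∈ Finset.Icc 1 N, (1 : ℝ) / i) / k := by
  have hcdf (z : ℝ) (hz : z ∈ Icc (0 : ℝ) 1) :
      μ {ω | Z ω ≤ z} = ENNReal.ofReal (1 - (1 - z ^ k) ^ N) :=
    measure_le_eq_ofReal_one_sub hZ
      (pow_nonneg (sub_nonneg.mpr (pow_le_one₀ hz.1 hz.2)) N) (hccdf z hz)
  have hpos : ∀ᵐ ω ∂μ, 0 < Z ω := by
    rw [ae_iff]
    simpa [hk] using hcdf 0 ⟨le_rfl, zero_le_one⟩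
  have htail : ∀ t ∈ Ioi (0 : ℝ),
      μ {ω | Z ω ≤ exp (-t)} = ENNReal.ofReal (1 - (1 - exp (-(k * t))) ^ N) := by
    intro t ht
    rw [hcdf _ ⟨(exp_pos _).le, exp_le_one_iff.mpr (neg_nonpos.mpr (le_of_lt ht))⟩,
      ← exp_nat_mul, mul_neg]
  have htail_nonneg : 0 ≤ᵐ[volume.restrict (Ioi 0)] fun t => 1 - (1 - exp (-(k * t))) ^ N := by
    filter_upwards [ae_restrict_mem measurableSet_Ioi] with t ht
    have he : exp (-(k * t)) ≤ 1 :=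
      exp_le_one_iff.mpr (neg_nonpos.mpr (mul_nonneg k.cast_nonneg (le_of_lt ht)))
    have he0 := exp_pos (-(k * t))
    exact sub_nonneg.mpr (pow_le_one₀ (by linarith) (by linarith))
  have hk_pos : (0 : ℝ) < k := by positivity
  calc ∫ ω, log (Z ω) ∂μ = -∫ ω, -log (Z ω) ∂μ := by rw [integral_neg, neg_neg]
    _ = -(∫⁻ t in Ioi 0, ENNReal.ofReal (1 - (1 - exp (-(k * t))) ^ N)).toReal := by
      rw [integral_neg_log_eq_lintegral_measure_le_exp hZ.aemeasurable hpos
        (ae_of_all _ fun ω => (hval ω).2), setLIntegral_congr_fun measurableSet_Ioi htail]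
    _ = -∫ t in Ioi 0, 1 - (1 - exp (-(k * t))) ^ N := by
      rw [← ofReal_integral_eq_lintegral_ofReal
        (integrableOn_one_sub_one_sub_exp_pow hk_pos N) htail_nonneg,
        ENNReal.toReal_ofReal (integral_nonneg_of_ae htail_nonneg)]
    _ = -(∑ i ∈ Finset.Icc 1 N, (1 : ℝ) / i) / k := by
      rw [integral_one_sub_one_sub_exp_pow hk_pos, neg_div]

end LogLayerCake

theorem stmt10_general {Ω : Type*} [MeasurableSpace Ω] (μ : Measure Ω) [IsProbabilityMeasure μ]
    (M N : ℕ) (hM : 2 ≤ M)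
    (Z : Ω → ℝ) (hmeas : Measurable Z) (hval : ∀ ω, Z ω ∈ Set.Icc (0 : ℝ) 1)
    (hccdf : ∀ z ∈ Set.Icc (0 : ℝ) 1,
      μ {ω | z < Z ω} = ENNReal.ofReal ((1 - z ^ (M - 1)) ^ N)) :
    ∫ ω, Real.log (Z ω) ∂μ = -(1 / ((M : ℝ) - 1)) * ∑ i ∈ Finset.Icc 1 N, (1 : ℝ) / (i : ℝ) := by
  rw [integral_log_of_measure_gt_eq_one_sub_pow_pow (by omega) N hmeas hval hccdf,
    Nat.cast_sub (by omega : 1 ≤ M), Nat.cast_one]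
  ring

/-- If `Z` has complementary CDF `(1 − z^{M−1})^N` on `[0,1]` then
`E[ln Z] = −(1/(M−1)) · ∑_{i=1}^N 1/i`. -/
theorem stmt10 {Ω : Type*} [MeasurableSpace Ω] (μ : Measure Ω) [IsProbabilityMeasure μ]
    (M N : ℕ) (hM : 2 ≤ M) (hN : 1 ≤ N)
    (Z : Ω → ℝ) (hmeas : Measurable Z) (hval : ∀ ω, Z ω ∈ Set.Icc (0 : ℝ) 1)
    (hccdf : ∀ z ∈ Set.Icc (0 : ℝ) 1,
      μ {ω | z < Z ω} = ENNReal.ofReal ((1 - z ^ (M - 1)) ^ N)) :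
    ∫ ω, Real.log (Z ω) ∂μ = -(1 / ((M : ℝ) - 1)) * ∑ i ∈ Finset.Icc 1 N, (1 : ℝ) / (i : ℝ) :=
  stmt10_general μ M N hM Z hmeas hval hccdf
end

section
/- The expected quantization error b ↦ 2^b · B(2^b, M/(M−1)) is strictly decreasing in b for every integer M ≥ 2. -/
/-- The Beta function `B(x,y) = Γ(x)Γ(y)/Γ(x+y)`. -/
noncomputable def Beta (x y : ℝ) : ℝ := Real.Gamma x * Real.Gamma y / Real.Gamma (x + y)

/-!
Since `Γ(x + 1) = x Γ(x)`, the quantity `x B(x, y)` gets multiplied by `(x + 1)/(x + y)` when `x`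
grows by one. For `y > 1` this factor is below one, so `n ↦ n B(n, y)` decreases strictly along
the positive integers, in particular along the powers of two. With `y = M/(M − 1)` we have
`y > 1` for every `M ≥ 2`.
-/

lemma Beta_pos {x y : ℝ} (hx : 0 < x) (hy : 0 < y) : 0 < Beta x y := by
  have := Real.Gamma_pos_of_pos hx
  have := Real.Gamma_pos_of_pos hy
  have := Real.Gamma_pos_of_pos (add_pos hx hy)
  unfold Beta
  positivity

lemma Beta_add_one {x y : ℝ} (hx : x ≠ 0) (hxy : x + y ≠ 0) :
    Beta (x + 1) y = x / (x + y) * Beta x y := by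
  unfold Beta
  rw [Real.Gamma_add_one hx, show x + 1 + y = x + y + 1 by ring, Real.Gamma_add_one hxy, mul_assoc x, mul_div_mul_comm]

lemma add_one_mul_Beta_add_one_lt {x y : ℝ} (hx : 0 < x) (hy : 1 < y) :
    (x + 1) * Beta (x + 1) y < x * Beta x y := by
  have hB := Beta_pos hx (zero_lt_one.trans hy)
  rw [Beta_add_one hx.ne' (by linarith)]
  calc (x + 1) * (x / (x + y) * Beta x y) = (x + 1) / (x + y) * (x * Beta x y) := by ring
    _ < 1 * (x * Beta x y) :=
        mul_lt_mul_of_pos_right ((div_lt_one (by linarith)).2 (by linarith)) (by positivity)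
    _ = x * Beta x y := one_mul _

lemma strictAntiOn_natCast_mul_Beta {y : ℝ} (hy : 1 < y) :
    StrictAntiOn (fun n : ℕ => (n : ℝ) * Beta n y) (Set.Ici 1) :=
  strictAntiOn_of_succ_lt Set.ordConnected_Ici fun n _ hn _ => by
    simpa [Order.succ_eq_add_one] using
      add_one_mul_Beta_add_one_lt (x := n) (Nat.cast_pos.2 hn) hy

/-- The expected RVQ quantization error `b ↦ 2^b · B(2^b, M/(M−1))` is strictly
decreasing in the feedback size `b`. -/
theorem stmt13 (M : ℕ) (hM : 2 ≤ M) :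
    StrictAnti (fun b : ℕ => (2 : ℝ) ^ b * Beta (2 ^ b) ((M : ℝ) / ((M : ℝ) - 1))) := by
  have hM' : (2 : ℝ) ≤ M := by exact_mod_cast hM
  have hy : 1 < (M : ℝ) / ((M : ℝ) - 1) := by
    rw [one_lt_div (by linarith)]
    linarith
  intro a b hab
  simpa using strictAntiOn_natCast_mul_Beta hy Nat.one_le_two_pow Nat.one_le_two_pow
    (Nat.pow_lt_pow_right one_lt_two hab)
end

section
/- Among all vectors b = (b₁,…,b_K) of nonnegative integers with ∑ b_k = K·b̄, the sum ∑_{k=1}^K H(2^{b_k}) of harmonic numbers is maximized by the allocation (K·b̄, 0, …, 0) and minimized by the equal allocation (b̄, …, b̄). -/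
/-!
The sequence `b ↦ H(2^b)` is convex: its increment `∑_{2^b < i ≤ 2^(b+1)} 1/i` grows with `b`,
since pairing the terms `1/(2q-1) + 1/(2q)` of the next block dominates `1/q`. For a sequence `f` with
nondecreasing increments the tangent line at `b̄` lies below it (discrete Jensen, giving the
lower bound), and `f a + f c ≤ f (a + c) + f 0` (giving the upper bound by induction).
-/

/-- The harmonicSum number `H(n) = ∑_{i=1}^n 1/i`. -/
noncomputable def harmonicSum (n : ℕ) : ℝ := ∑ i ∈ Finset.Icc 1 n, (1 : ℝ) / (i : ℝ)

open Finset

section MonotoneIncrements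

variable {f : ℕ → ℝ}

theorem add_sub_mul_increment_le (hf : Monotone fun n => f (n + 1) - f n) (m x : ℕ) :
    f m + ((x : ℝ) - m) * (f (m + 1) - f m) ≤ f x := by
  rcases le_total m x with hmx | hxm
  · have hsum : (#(Ico m x)) • (f (m + 1) - f m) ≤ ∑ i ∈ Ico m x, (f (i + 1) - f i) :=
      card_nsmul_le_sum _ _ _ fun i hi => hf (mem_Ico.mp hi).1
    rw [sum_Ico_sub f hmx, Nat.card_Ico, nsmul_eq_mul, Nat.cast_sub hmx] at hsum
    linarith
  · have hsum : ∑ i ∈ Ico x m, (f (i + 1) - f i) ≤ (#(Ico x m)) • (f (m + 1) - f m) :=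
      sum_le_card_nsmul _ _ _ fun i hi => hf (mem_Ico.mp hi).2.le
    rw [sum_Ico_sub f hxm, Nat.card_Ico, nsmul_eq_mul, Nat.cast_sub hxm] at hsum
    linarith

theorem card_mul_le_sum_of_monotone_increment (hf : Monotone fun n => f (n + 1) - f n)
    {ι : Type*} (s : Finset ι) (b : ι → ℕ) (m : ℕ) (hsum : ∑ i ∈ s, b i = #s * m) :
    #s * f m ≤ ∑ i ∈ s, f (b i) := by
  have hdev : ∑ i ∈ s, ((b i : ℝ) - m) = 0 := by
    rw [sum_sub_distrib, ← Nat.cast_sum, hsum, sum_const, nsmul_eq_mul]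
    push_cast
    ring
  calc (#s : ℝ) * f m
      = ∑ i ∈ s, (f m + ((b i : ℝ) - m) * (f (m + 1) - f m)) := by
        rw [sum_add_distrib, ← sum_mul, hdev, sum_const, nsmul_eq_mul]
        ring
    _ ≤ ∑ i ∈ s, f (b i) := sum_le_sum fun i _ => add_sub_mul_increment_le hf m (b i)

theorem add_le_add_zero_of_monotone_increment (hf : Monotone fun n => f (n + 1) - f n)
    (a c : ℕ) : f a + f c ≤ f (a + c) + f 0 := by
  have hle : ∑ i ∈ range a, (f (i + 1) - f i) ≤
      ∑ i ∈ range a, (f (c + (i + 1)) - f (c + i)) :=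
    sum_le_sum fun i _ => hf (Nat.le_add_left i c)
  rw [sum_range_sub f, sum_range_sub (fun i => f (c + i)), add_zero] at hle
  rw [add_comm a c]
  linarith

theorem sum_sub_le_of_monotone_increment (hf : Monotone fun n => f (n + 1) - f n)
    {ι : Type*} (s : Finset ι) (b : ι → ℕ) :
    ∑ i ∈ s, (f (b i) - f 0) ≤ f (∑ i ∈ s, b i) - f 0 := by
  classical
  induction s using Finset.induction_on with
  | empty => simp
  | insert a s ha ih =>
    rw [sum_insert ha, sum_insert ha]
    linarith [add_le_add_zero_of_monotone_increment hf (b a) (∑ i ∈ s, b i)]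

end MonotoneIncrements

theorem harmonicSum_add_sub (n m : ℕ) :
    harmonicSum (n + m) - harmonicSum n = ∑ j ∈ range m, 1 / ((n : ℝ) + j + 1) := by
  have htel := sum_range_sub (fun j => harmonicSum (n + j)) m
  rw [add_zero] at htel
  rw [← htel]
  refine sum_congr rfl fun j _ => ?_
  rw [harmonicSum, harmonicSum, ← add_assoc, sum_Icc_succ_top (by omega)]
  push_cast
  ring

theorem sum_range_two_mul {M : Type*} [AddCommMonoid M] (g : ℕ → M) (n : ℕ) :
    ∑ j ∈ range (2 * n), g j = ∑ j ∈ range n, (g (2 * j) + g (2 * j + 1)) := by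
  induction n with
  | zero => simp
  | succ n ih =>
    rw [mul_add, mul_one, sum_range_succ, sum_range_succ, ih, sum_range_succ, add_assoc]

theorem harmonicSum_two_pow_succ_sub (b : ℕ) :
    harmonicSum (2 ^ (b + 1)) - harmonicSum (2 ^ b) =
      ∑ j ∈ range (2 ^ b), 1 / ((2 : ℝ) ^ b + j + 1) := by
  rw [pow_succ, mul_two, harmonicSum_add_sub]
  push_cast
  rfl

theorem monotone_harmonicSum_two_pow_increment :
    Monotone fun b => harmonicSum (2 ^ (b + 1)) - harmonicSum (2 ^ b) := by
  refine monotone_nat_of_le_succ fun b => ?_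
  simp only [harmonicSum_two_pow_succ_sub]
  rw [pow_succ' 2 b, sum_range_two_mul]
  refine sum_le_sum fun j _ => ?_
  push_cast
  rw [pow_succ]
  have hp : (0 : ℝ) < 2 ^ b := by positivity
  have hj : (0 : ℝ) ≤ j := j.cast_nonneg
  rw [div_add_div _ _ (by positivity) (by positivity),
    div_le_div_iff₀ (by positivity) (by positivity)]
  nlinarith

theorem stmt15_general (K bbar : ℕ)
    (b : Fin K → ℕ) (hsum : ∑ k, b k = K * bbar) :
    (∑ _k : Fin K, harmonicSum (2 ^ bbar)) ≤ ∑ k, harmonicSum (2 ^ b k) ∧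
    (∑ k, harmonicSum (2 ^ b k)) ≤
      ∑ k : Fin K, harmonicSum (2 ^ (if (k : ℕ) = 0 then K * bbar else 0)) := by
  have hf := monotone_harmonicSum_two_pow_increment
  constructor
  · simpa using card_mul_le_sum_of_monotone_increment (f := fun b => harmonicSum (2 ^ b)) hf
      univ b bbar (by simpa using hsum)
  · obtain _ | n := K
    · simp
    have hsup := sum_sub_le_of_monotone_increment (f := fun b => harmonicSum (2 ^ b)) hf univ b
    have hrhs :
        ∑ k : Fin (n + 1), harmonicSum (2 ^ (if (k : ℕ) = 0 then (n + 1) * bbar else 0)) =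
          harmonicSum (2 ^ ((n + 1) * bbar)) + n * harmonicSum 1 := by
      simp [Fin.sum_univ_succ]
    simp only [sum_sub_distrib, hsum, sum_const, card_univ, Fintype.card_fin, nsmul_eq_mul] at hsup
    push_cast at hsup
    linarith

/-- Among all feedback allocations with sum `K·b̄`, the sum `∑ H(2^{b_k})` is
minimized by the equal allocation and maximized by giving everything to one user. -/
theorem stmt15 (K bbar : ℕ) (hK : 1 ≤ K) (hbbar : 0 < bbar)
    (b : Fin K → ℕ) (hsum : ∑ k, b k = K * bbar) :
    (∑ _k : Fin K, harmonicSum (2 ^ bbar)) ≤ ∑ k, harmonicSum (2 ^ b k) ∧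
    (∑ k, harmonicSum (2 ^ b k)) ≤
      ∑ k : Fin K, harmonicSum (2 ^ (if (k : ℕ) = 0 then K * bbar else 0)) :=
  stmt15_general K bbar b hsum
end
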